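/- The following are equivalent: (a) every ideal of $R$ is a strong $\mathcal{H}_Y$-ideal; (b) every finitely generated ideal of $R$ is a $Y$-Hilbert ideal; (c) every ideal of $R$ is an $\mathcal{H}_Y$-ideal; (d) every principal ideal of $R$ is an $\mathcal{H}_Y$-ideal; (e) every principal ideal of $R$ is a $Y$-Hilbert ideal; (f) $k(Y) = \langle 0 \rangle$ and $R$ is von Neumann regular (for every $a \in R$ there is $b \in R$ with $a = a^2 b$); (g) $k(Y) = \langle 0 \rangle$ and every essential ideal of $R$ is an $\mathcal{H}_Y$-ideal. -/

import Mathlib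

/-- `hSet Y S` is the set of primes (ideals) in `Y` containing the subset `S`. -/
def hSet {R : Type*} [CommRing R] (Y : Set (Ideal R)) (S : Set R) : Set (Ideal R) :=
  {P ∈ Y | S ⊆ (P : Set R)}

/-- `kSet 𝒮` is the intersection of the ideals in `𝒮` (the whole ring if `𝒮 = ∅`). -/
def kSet {R : Type*} [CommRing R] (𝒮 : Set (Ideal R)) : Ideal R := sInf 𝒮

/-- An `ℋ_Y`-ideal. -/
def IsHIdeal {R : Type*} [CommRing R] (Y : Set (Ideal R)) (I : Ideal R) : Prop :=
  ∀ a ∈ I, ∀ b : R, hSet Y {a} ⊆ hSet Y {b} → b ∈ I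

/-- A strong `ℋ_Y`-ideal. -/
def IsStrongHIdeal {R : Type*} [CommRing R] (Y : Set (Ideal R)) (I : Ideal R) : Prop :=
  ∀ F : Set R, F.Finite → F ⊆ (I : Set R) → ∀ b : R, hSet Y F ⊆ hSet Y {b} → b ∈ I

/-- A `Y`-Hilbert ideal. -/
def IsYHilbert {R : Type*} [CommRing R] (Y : Set (Ideal R)) (I : Ideal R) : Prop :=
  I = kSet (hSet Y (I : Set R))

/-! In a von Neumann regular ring every ideal is idempotent, so a finitely generated ideal is
generated by an idempotent `e`. If `h_Y(e) ⊆ h_Y(b)`, then `b (1 - e)` lies in every `P ∈ Y`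
(either `e ∈ P`, or `1 - e ∈ P` because `e (1 - e) = 0`), so `b = b e` once `k(Y) = 0`.
Conversely, the `ℋ_Y`-property of `⟨a²⟩`, or of the essential ideal `⟨a²⟩ + Ann(a²)`, puts `a`
into it because `h_Y(a²) = h_Y(a)`; in the second case `R` is reduced (as `k(Y) = 0`), which
kills the annihilator component. -/

open Ideal

section

variable {R : Type*} [CommRing R] {Y : Set (Ideal R)}

lemma mem_kSet {𝒮 : Set (Ideal R)} {x : R} : x ∈ kSet 𝒮 ↔ ∀ P ∈ 𝒮, x ∈ P :=
  Submodule.mem_sInf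

lemma mem_hSet_singleton {P : Ideal R} {a : R} : P ∈ hSet Y {a} ↔ P ∈ Y ∧ a ∈ P := by
  simp [hSet]

lemma hSet_span (s : Set R) : hSet Y (span s) = hSet Y s := by
  ext P
  simp only [hSet, Set.mem_ofPred_eq, SetLike.coe_subset_coe, span_le]

lemma hSet_singleton_pow_subset (hprime : ∀ P ∈ Y, P.IsPrime) (a : R) (n : ℕ) :
    hSet Y {a ^ n} ⊆ hSet Y {a} := fun P hP => by
  rw [mem_hSet_singleton] at hP ⊢
  exact ⟨hP.1, (hprime P hP.1).mem_of_pow_mem n hP.2⟩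

lemma le_kSet_hSet (I : Ideal R) : I ≤ kSet (hSet Y I) :=
  fun _ hx => mem_kSet.mpr fun _ hP => hP.2 hx

lemma IsStrongHIdeal.isHIdeal {I : Ideal R} (h : IsStrongHIdeal Y I) : IsHIdeal Y I :=
  fun a ha b hb => h {a} (Set.finite_singleton a) (Set.singleton_subset_iff.mpr ha) b hb

lemma IsStrongHIdeal.isYHilbert {I : Ideal R} (h : IsStrongHIdeal Y I) (hI : I.FG) :
    IsYHilbert Y I := by
  obtain ⟨s, rfl⟩ := hI
  refine (le_kSet_hSet _).antisymm fun b hb => h s s.finite_toSet subset_span b fun P hP => ?_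
  rw [← hSet_span] at hP
  exact mem_hSet_singleton.mpr ⟨hP.1, mem_kSet.mp hb P hP⟩

lemma IsYHilbert.isHIdeal {I : Ideal R} (h : IsYHilbert Y I) : IsHIdeal Y I := by
  intro a ha b hab
  rw [h]
  exact mem_kSet.mpr fun P hP =>
    (mem_hSet_singleton.mp (hab (mem_hSet_singleton.mpr ⟨hP.1, hP.2 ha⟩))).2

lemma kSet_eq_bot_of_isHIdeal_bot (h : IsHIdeal Y ⊥) : kSet Y = ⊥ :=
  eq_bot_iff.mpr fun a ha => h 0 (zero_mem _) a fun P hP =>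
    mem_hSet_singleton.mpr ⟨hP.1, mem_kSet.mp ha P hP.1⟩

lemma exists_eq_sq_mul_of_isHIdeal (hprime : ∀ P ∈ Y, P.IsPrime) {a : R}
    (h : IsHIdeal Y (span {a ^ 2})) : ∃ b, a = a ^ 2 * b :=
  mem_span_singleton.mp (h _ (mem_span_singleton_self _) a (hSet_singleton_pow_subset hprime a 2))

lemma isReduced_of_kSet_eq_bot (hprime : ∀ P ∈ Y, P.IsPrime) (hk : kSet Y = ⊥) :
    IsReduced R := by
  refine ⟨fun x ⟨n, hn⟩ => ?_⟩
  have hx : x ∈ kSet Y :=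
    mem_kSet.mpr fun P hP => (hprime P hP).mem_of_pow_mem n (hn ▸ P.zero_mem)
  rwa [hk, mem_bot] at hx

lemma isIdempotentElem_of_regular (hv : ∀ a : R, ∃ b, a = a ^ 2 * b) (I : Ideal R) :
    IsIdempotentElem I := by
  refine mul_le_right.antisymm fun a ha => ?_
  obtain ⟨b, hb⟩ := hv a
  rw [hb, pow_two, mul_assoc]
  exact mul_mem_mul ha (I.mul_mem_right b ha)

lemma mem_span_idempotent_of_hSet_subset (hprime : ∀ P ∈ Y, P.IsPrime) (hk : kSet Y = ⊥)
    {e b : R} (he : IsIdempotentElem e) (hb : hSet Y {e} ⊆ hSet Y {b}) : b ∈ span {e} := by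
  have hcompl : b * (1 - e) ∈ kSet Y := mem_kSet.mpr fun P hP => by
    by_cases heP : e ∈ P
    · exact P.mul_mem_right _ (mem_hSet_singleton.mp (hb (mem_hSet_singleton.mpr ⟨hP, heP⟩))).2
    · refine P.mul_mem_left _ (((hprime P hP).mem_or_mem ?_).resolve_left heP)
      rw [mul_sub, mul_one, he.eq, sub_self]
      exact P.zero_mem
  rw [hk, mem_bot] at hcompl
  exact mem_span_singleton'.mpr ⟨b, by linear_combination -hcompl⟩

lemma isStrongHIdeal_of_regular (hprime : ∀ P ∈ Y, P.IsPrime) (hk : kSet Y = ⊥)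
    (hv : ∀ a : R, ∃ b, a = a ^ 2 * b) (I : Ideal R) : IsStrongHIdeal Y I := by
  intro F hF hFI b hb
  obtain ⟨e, he, hFe⟩ := (isIdempotentElem_iff_of_fg (span F) (Submodule.fg_span hF)).mp
    (isIdempotentElem_of_regular hv _)
  rw [submodule_span_eq] at hFe
  have hbe : b ∈ span {e} :=
    mem_span_idempotent_of_hSet_subset hprime hk he (by rwa [← hSet_span, hFe, hSet_span] at hb)
  exact span_le.mpr hFI (hFe ▸ hbe)

lemma span_singleton_sup_annihilator_inf_ne_bot (x : R) {J : Ideal R} (hJ : J ≠ ⊥) :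
    (span {x} ⊔ (span {x}).annihilator) ⊓ J ≠ ⊥ := by
  obtain ⟨y, hyJ, hy0⟩ := Submodule.exists_mem_ne_zero_of_ne_bot hJ
  rw [Submodule.ne_bot_iff]
  by_cases hxy : x * y = 0
  · refine ⟨y, ⟨mem_sup_right ?_, hyJ⟩, hy0⟩
    rwa [Submodule.mem_annihilator_span_singleton, smul_eq_mul, mul_comm]
  · exact ⟨x * y, ⟨mem_sup_left (mul_mem_right y _ (mem_span_singleton_self x)),
      J.mul_mem_left x hyJ⟩, hxy⟩

lemma exists_eq_sq_mul_of_mem_sup_annihilator [IsReduced R] {a : R}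
    (h : a ∈ span {a ^ 2} ⊔ (span {a ^ 2}).annihilator) : ∃ b, a = a ^ 2 * b := by
  obtain ⟨r, z, hz, hrz⟩ := mem_span_singleton_sup.mp h
  rw [Submodule.mem_annihilator_span_singleton, smul_eq_mul] at hz
  have haz : a * z = 0 := eq_zero_of_pow_eq_zero (n := 2) (by linear_combination z * hz)
  have hz0 : z = 0 :=
    eq_zero_of_pow_eq_zero (n := 2) (by linear_combination z * hrz - r * hz + haz)
  exact ⟨r, by linear_combination hz0 - hrz⟩

end

/-- characterizations of the rings in which every ideal is a
(strong) `ℋ_Y`-ideal: this holds iff `k(Y) = ⟨0⟩` and `R` is von Neumann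
regular, etc. -/
theorem stmt15 {R : Type*} [CommRing R] (Y : Set (Ideal R))
    (hprime : ∀ P ∈ Y, P.IsPrime) :
    [ (∀ I : Ideal R, IsStrongHIdeal Y I),
      (∀ I : Ideal R, I.FG → IsYHilbert Y I),
      (∀ I : Ideal R, IsHIdeal Y I),
      (∀ a : R, IsHIdeal Y (Ideal.span {a})),
      (∀ a : R, IsYHilbert Y (Ideal.span {a})),
      (kSet Y = ⊥ ∧ ∀ a : R, ∃ b : R, a = a ^ 2 * b),
      (kSet Y = ⊥ ∧ ∀ E : Ideal R,
        (∀ J : Ideal R, J ≠ ⊥ → E ⊓ J ≠ ⊥) → IsHIdeal Y E) ].TFAE := by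
  tfae_have 1 → 2 := fun h I hI => (h I).isYHilbert hI
  tfae_have 2 → 5 := fun h a => h _ (Submodule.fg_span_singleton a)
  tfae_have 5 → 4 := fun h a => (h a).isHIdeal
  tfae_have 1 → 3 := fun h I => (h I).isHIdeal
  tfae_have 3 → 4 := fun h a => h _
  tfae_have 4 → 6 := fun h =>
    ⟨kSet_eq_bot_of_isHIdeal_bot (by simpa using h 0),
      fun a => exists_eq_sq_mul_of_isHIdeal hprime (h (a ^ 2))⟩
  tfae_have 6 → 1 := fun ⟨hk, hv⟩ => isStrongHIdeal_of_regular hprime hk hv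
  tfae_have 6 → 7 := fun ⟨hk, hv⟩ =>
    ⟨hk, fun E _ => (isStrongHIdeal_of_regular hprime hk hv E).isHIdeal⟩
  tfae_have 7 → 6 := by
    rintro ⟨hk, hE⟩
    have := isReduced_of_kSet_eq_bot hprime hk
    refine ⟨hk, fun a => exists_eq_sq_mul_of_mem_sup_annihilator ?_⟩
    exact hE _ (fun _ => span_singleton_sup_annihilator_inf_ne_bot (a ^ 2)) (a ^ 2)
      (mem_sup_left (mem_span_singleton_self _)) a (hSet_singleton_pow_subset hprime a 2)
  tfae_finish
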